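/- arXiv:1111.0953 — 2 statements merged into one kernel-verified Lean document; each statement's English description precedes it below -/
import Mathlib

section
/- The set of period-two points of the Fibonacci trace map f (points p with f(f(p)) = p and f(p) ≠ p), intersected with the region x ≠ 1/2, is contained in the curve {(x, x/(2x−1), x) : x ∈ ℝ, x ≠ 1/2}; conversely, every point of this curve with f(p) ≠ p satisfies f²(p) = p. -/
def traceMap : ℝ × ℝ × ℝ → ℝ × ℝ × ℝ :=
  fun p => (2 * p.1 * p.2.1 - p.2.2, p.1, p.2.1)

/-- Writing `p = (x, y, z)`, `f² p = (2x(2xy - z) - y, 2xy - z, x)`: the third coordinate forces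
`z = x`, after which the other two both reduce to `y (2x - 1) = x`. -/
theorem traceMap_traceMap_eq_self_iff (p : ℝ × ℝ × ℝ) :
    traceMap (traceMap p) = p ↔ p.2.2 = p.1 ∧ p.2.1 * (2 * p.1 - 1) = p.1 := by
  obtain ⟨x, y, z⟩ := p
  simp only [traceMap, Prod.mk.injEq]
  constructor
  · rintro ⟨-, hy, hz⟩
    exact ⟨hz.symm, by linarith⟩
  · rintro ⟨rfl, hy⟩
    refine ⟨?_, by linarith, rfl⟩
    linear_combination 2 * z * hy + hy

theorem period_two_points :
    (∀ p : ℝ × ℝ × ℝ, traceMap (traceMap p) = p → traceMap p ≠ p → p.1 ≠ 1 / 2 →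
      p.2.1 = p.1 / (2 * p.1 - 1) ∧ p.2.2 = p.1) ∧
    (∀ x : ℝ, x ≠ 1 / 2 → traceMap (x, x / (2 * x - 1), x) ≠ (x, x / (2 * x - 1), x) →
      traceMap (traceMap (x, x / (2 * x - 1), x)) = (x, x / (2 * x - 1), x)) := by
  have two_mul_sub_one_ne_zero {x : ℝ} (hx : x ≠ 1 / 2) : 2 * x - 1 ≠ 0 := by
    contrapose! hx
    linarith
  constructor
  · intro p hp _ hx
    obtain ⟨hz, hy⟩ := (traceMap_traceMap_eq_self_iff p).1 hp
    exact ⟨(eq_div_iff (two_mul_sub_one_ne_zero hx)).2 hy, hz⟩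
  · intro x hx _
    exact (traceMap_traceMap_eq_self_iff _).2 ⟨rfl, div_mul_cancel₀ x (two_mul_sub_one_ne_zero hx)⟩
end

section
/- Let η < π/4, ε ∈ [0, η], and set M = 1 + (n−1)·tan(2ε). Then for any C¹ regular curve α : [0,1] → ℝⁿ with α(0) ≠ α(1) such that the tangent vector α′(t) lies in the open cone of angle ε around α′(0) for all t, the length of α is at most M times the distance ‖α(0) − α(1)‖. -/
/-!
Let `u` be the unit vector along `α' 0`. The cone condition gives
`⟪u, α' t⟫ ≥ cos ε * ‖α' t‖`, so integrating, `cos ε * length α ≤ ⟪u, α 1 - α 0⟫ ≤ ‖α 0 - α 1‖`.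
For `n ≥ 2` it remains that `sec ε ≤ 1 + tan ε ≤ 1 + (n - 1) * tan (2 * ε)`. On a line the
cone condition forces `α'` to keep the direction of `α' 0`, so there the length is the distance.
-/

open Real Set InnerProductGeometry Module
open scoped RealInnerProductSpace

section CurveLength

variable {E : Type*} [NormedAddCommGroup E] [InnerProductSpace ℝ E]

theorem integral_norm_deriv_le_inv_mul_norm_sub {f f' : ℝ → E} {u : E} {a b c : ℝ}
    (hab : a ≤ b) (hc : 0 < c) (hu : ‖u‖ ≤ 1) (hf : ∀ t ∈ Icc a b, HasDerivAt f (f' t) t)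
    (hinner : ∀ t ∈ Icc a b, c * ‖f' t‖ ≤ ⟪u, f' t⟫) :
    ∫ t in a..b, ‖f' t‖ ≤ c⁻¹ * ‖f b - f a‖ := by
  by_cases hint : IntervalIntegrable (fun t => ‖f' t‖) MeasureTheory.volume a b
  swap
  · rw [intervalIntegral.integral_undef hint]
    positivity
  have hderiv : ∀ t ∈ Icc a b, HasDerivAt (fun s => ⟪u, f s⟫) ⟪u, f' t⟫ t := fun t ht =>
    (innerSL ℝ u).hasFDerivAt.comp_hasDerivAt t (hf t ht)
  rw [le_inv_mul_iff₀ hc, ← intervalIntegral.integral_const_mul]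
  calc ∫ t in a..b, c * ‖f' t‖
      ≤ ⟪u, f b⟫ - ⟪u, f a⟫ :=
        intervalIntegral.integral_le_sub_of_hasDeriv_right_of_le hab
          (fun t ht => (hderiv t ht).continuousAt.continuousWithinAt)
          (fun t ht => (hderiv t (Ioo_subset_Icc_self ht)).hasDerivWithinAt)
          ((intervalIntegrable_iff_integrableOn_Icc_of_le hab).1 (hint.const_mul c))
          (fun t ht => hinner t (Ioo_subset_Icc_self ht))
    _ = ⟪u, f b - f a⟫ := (inner_sub_right _ _ _).symm
    _ ≤ ‖u‖ * ‖f b - f a‖ := real_inner_le_norm _ _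
    _ ≤ ‖f b - f a‖ := mul_le_of_le_one_left (norm_nonneg _) hu

theorem cos_mul_norm_le_inner_of_angle_le {v w : E} {ε : ℝ} (hε : ε ≤ π) (h : angle w v ≤ ε) :
    cos ε * ‖w‖ ≤ ⟪‖v‖⁻¹ • v, w⟫ := by
  rcases eq_or_ne v 0 with rfl | hv
  · rw [angle_zero_right] at h
    simpa using mul_nonpos_of_nonpos_of_nonneg
      (cos_nonpos_of_pi_div_two_le_of_le h (by linarith [pi_pos])) (norm_nonneg w)
  rw [real_inner_smul_left, ← cos_angle_mul_norm_mul_norm, angle_comm,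
    inv_mul_eq_div, mul_div_assoc, mul_div_cancel_left₀ _ (norm_ne_zero_iff.2 hv)]
  gcongr
  exact cos_le_cos_of_nonneg_of_le_pi (angle_nonneg _ _) hε h

theorem angle_eq_zero_of_finrank_eq_one (hE : finrank ℝ E = 1) {x y : E}
    (h : angle x y < π / 2) : angle x y = 0 := by
  have hx : x ≠ 0 := by
    rintro rfl
    simp at h
  obtain ⟨r, rfl⟩ := (finrank_eq_one_iff_of_nonzero' x hx).1 hE y
  rcases lt_trichotomy r 0 with hr | rfl | hr
  · rw [angle_smul_right_of_neg _ _ hr, angle_self_neg_of_nonzero hx] at h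
    linarith [pi_pos]
  · simp at h
  · rw [angle_smul_right_of_pos _ _ hr, angle_self hx]

end CurveLength

theorem inv_cos_le_one_add_tan {x : ℝ} (h0 : 0 ≤ x) (h1 : x < π / 2) :
    (cos x)⁻¹ ≤ 1 + tan x := by
  have hcos : 0 < cos x := cos_pos_of_mem_Ioo ⟨by linarith, h1⟩
  have hsin : 0 ≤ sin x := sin_nonneg_of_nonneg_of_le_pi h0 (by linarith)
  -- `sin x, cos x ∈ [0, 1]` dominate their squares, which sum to `1`.
  have : 1 ≤ cos x + sin x := by
    nlinarith [sin_sq_add_cos_sq x, sin_le_one x, cos_le_one x]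
  rw [tan_eq_sin_div_cos, one_add_div hcos.ne', inv_eq_one_div]
  gcongr

open InnerProductGeometry in
theorem curve_length_bound_general (n : ℕ) (η ε : ℝ) (hη : η < Real.pi / 4)
    (hε : ε ∈ Set.Icc 0 η)
    (α α' : ℝ → EuclideanSpace ℝ (Fin n))
    (hderiv : ∀ t ∈ Set.Icc (0 : ℝ) 1, HasDerivAt α (α' t) t)
    (hends : α 0 ≠ α 1)
    (hcone : ∀ t ∈ Set.Icc (0 : ℝ) 1, angle (α' t) (α' 0) < ε) :
    ∫ t in (0 : ℝ)..1, ‖α' t‖ ≤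
      (1 + (n - 1 : ℝ) * Real.tan (2 * ε)) * ‖α 0 - α 1‖ := by
  obtain ⟨hε0, hεη⟩ := hε
  have hε4 : ε < π / 4 := hεη.trans_lt hη
  obtain ⟨c, hc, hcM, hc_inner⟩ : ∃ c, 0 < c ∧ c⁻¹ ≤ 1 + (n - 1 : ℝ) * tan (2 * ε) ∧
      ∀ t ∈ Icc (0 : ℝ) 1, c * ‖α' t‖ ≤ ⟪‖α' 0‖⁻¹ • α' 0, α' t⟫ := by
    rcases n with _ | _ | n
    · exact absurd (Subsingleton.elim _ _) hends
    · refine ⟨1, one_pos, by simp, fun t ht => ?_⟩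
      have h0 := angle_eq_zero_of_finrank_eq_one finrank_euclideanSpace_fin
        ((hcone t ht).trans (by linarith))
      simpa using cos_mul_norm_le_inner_of_angle_le pi_nonneg h0.le
    · refine ⟨cos ε, cos_pos_of_mem_Ioo ⟨by linarith [pi_pos], by linarith⟩, ?_,
        fun t ht => cos_mul_norm_le_inner_of_angle_le (by linarith) (hcone t ht).le⟩
      have htan : tan ε ≤ tan (2 * ε) := strictMonoOn_tan.monotoneOn
        ⟨by linarith [pi_pos], by linarith⟩ ⟨by linarith [pi_pos], by linarith⟩ (by linarith)
      have htan0 : 0 ≤ tan (2 * ε) :=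
        tan_nonneg_of_nonneg_of_le_pi_div_two (by linarith) (by linarith)
      calc (cos ε)⁻¹ ≤ 1 + tan ε := inv_cos_le_one_add_tan hε0 (by linarith)
        _ ≤ 1 + ((n + 2 : ℕ) - 1 : ℝ) * tan (2 * ε) := by push_cast; nlinarith
  have hu : ‖‖α' 0‖⁻¹ • α' 0‖ ≤ 1 := by
    rw [norm_smul, norm_inv, norm_norm]
    exact inv_mul_le_one_of_le₀ le_rfl (norm_nonneg _)
  calc ∫ t in (0 : ℝ)..1, ‖α' t‖ ≤ c⁻¹ * ‖α 1 - α 0‖ :=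
        integral_norm_deriv_le_inv_mul_norm_sub zero_le_one hc hu hderiv hc_inner
    _ ≤ _ := by
        rw [norm_sub_rev]
        gcongr

open InnerProductGeometry in
theorem curve_length_bound (n : ℕ) (η ε : ℝ) (hη : η < Real.pi / 4)
    (hε : ε ∈ Set.Icc 0 η)
    (α α' : ℝ → EuclideanSpace ℝ (Fin n))
    (hderiv : ∀ t ∈ Set.Icc (0 : ℝ) 1, HasDerivAt α (α' t) t)
    (hreg : ∀ t ∈ Set.Icc (0 : ℝ) 1, α' t ≠ 0)
    (hends : α 0 ≠ α 1)
    (hcone : ∀ t ∈ Set.Icc (0 : ℝ) 1, angle (α' t) (α' 0) < ε) :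
    ∫ t in (0 : ℝ)..1, ‖α' t‖ ≤
      (1 + (n - 1 : ℝ) * Real.tan (2 * ε)) * ‖α 0 - α 1‖ :=
  curve_length_bound_general n η ε hη hε α α' hderiv hends hcone
end
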